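/- arXiv:2512.09749 — 3 statements merged into one kernel-verified Lean document; each statement's English description precedes it below -/
import Mathlib

section
/- If a continuous function φ : ℝ → ℝ is bounded and satisfies the Zygmund condition |φ(x+t) - 2φ(x) + φ(x-t)| ≤ C·t, then for every α ∈ (0,1) there is a constant C' such that φ is α-Hölder continuous: |φ(x) - φ(y)| ≤ C'·|x - y|^α for all x, y with |x - y| ≤ 1. -/
/-- A bounded continuous function satisfying the Zygmund condition is
`α`-Hölder continuous for every `α ∈ (0,1)`, with constant depending only on
`α`, the Zygmund constant `C` and the bound `M`. -/
theorem zygmund_implies_holder (C M α : ℝ) (hC : 0 ≤ C) (hM : 0 ≤ M)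
    (hα0 : 0 < α) (hα1 : α < 1) :
    ∃ C' : ℝ, 0 ≤ C' ∧ ∀ φ : ℝ → ℝ, Continuous φ →
      (∀ x, |φ x| ≤ M) →
      (∀ x t : ℝ, 0 < t → |φ (x + t) - 2 * φ x + φ (x - t)| ≤ C * t) →
      ∀ x y : ℝ, |x - y| ≤ 1 → |φ x - φ y| ≤ C' * |x - y| ^ α := by
  have h1α : (0:ℝ) < 1 - α := by linarith
  refine ⟨2 * M + C / (1 - α) + C / 2, by positivity, ?_⟩
  intro φ _hcont hbd hzyg
  -- Key iteration lemma
  have key : ∀ n : ℕ, ∀ z h : ℝ, 0 < h →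
      |φ (z + h) - φ z| ≤ 2 * M / 2 ^ n + n * (C * h) / 2 := by
    intro n
    induction n with
    | zero =>
      intro z h _
      simp only [pow_zero, Nat.cast_zero, zero_mul, zero_div, add_zero]
      calc |φ (z + h) - φ z| ≤ |φ (z + h)| + |φ z| := abs_sub _ _
        _ ≤ M + M := add_le_add (hbd _) (hbd _)
        _ = 2 * M / 1 := by ring
    | succ n ih =>
      intro z h hh
      have hA := ih z (2 * h) (by linarith)
      have hB := hzyg (z + h) h hh
      have e1 : z + h + h = z + 2 * h := by ring
      have e2 : z + h - h = z := by ring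
      rw [e1, e2] at hB
      have hid : φ (z + h) - φ z
          = ((φ (z + 2 * h) - φ z) - (φ (z + 2 * h) - 2 * φ (z + h) + φ z)) / 2 := by
        ring
      calc |φ (z + h) - φ z|
          = |(φ (z + 2 * h) - φ z) - (φ (z + 2 * h) - 2 * φ (z + h) + φ z)| / 2 := by
            rw [hid, abs_div]; norm_num
        _ ≤ (|φ (z + 2 * h) - φ z| + |φ (z + 2 * h) - 2 * φ (z + h) + φ z|) / 2 := by
            gcongr; exact abs_sub _ _
        _ ≤ ((2 * M / 2 ^ n + n * (C * (2 * h)) / 2) + C * h) / 2 := by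
            gcongr
        _ = 2 * M / 2 ^ (n + 1) + (n + 1 : ℕ) * (C * h) / 2 := by
            push_cast
            rw [pow_succ]
            field_simp
            ring
  -- Hölder bound for a positive step h ≤ 1
  have bound : ∀ z h : ℝ, 0 < h → h ≤ 1 →
      |φ (z + h) - φ z| ≤ (2 * M + C / (1 - α) + C / 2) * h ^ α := by
    intro z h hh h1
    have hinv1 : (1:ℝ) ≤ h⁻¹ := one_le_inv_iff₀.mpr ⟨hh, h1⟩
    have hlog0 : 0 ≤ Real.log h⁻¹ := Real.log_nonneg hinv1
    set L := Real.logb 2 h⁻¹ with hL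
    have hL0 : 0 ≤ L := Real.logb_nonneg one_lt_two hinv1
    set n := ⌈L⌉₊ with hn
    -- 2^n ≥ h⁻¹
    have h2n : h⁻¹ ≤ (2:ℝ) ^ n := by
      have : (2:ℝ) ^ L ≤ (2:ℝ) ^ (n:ℝ) :=
        Real.rpow_le_rpow_of_exponent_le one_le_two (Nat.le_ceil L)
      rwa [Real.rpow_logb two_pos (by norm_num) (inv_pos.mpr hh), Real.rpow_natCast] at this
    have hA : 2 * M / 2 ^ n ≤ 2 * M * h := by
      rw [div_le_iff₀ (by positivity)]
      calc 2 * M = 2 * M * h * h⁻¹ := by field_simp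
        _ ≤ 2 * M * h * 2 ^ n := by
            have : 0 ≤ 2 * M * h := by positivity
            exact mul_le_mul_of_nonneg_left h2n this
    -- n ≤ 2 log h⁻¹ + 1
    have hB : (n:ℝ) ≤ 2 * Real.log h⁻¹ + 1 := by
      have hceil : (n:ℝ) < L + 1 := Nat.ceil_lt_add_one hL0
      have hlog2 : (0.6931471803 : ℝ) < Real.log 2 := Real.log_two_gt_d9
      have hLle : L ≤ 2 * Real.log h⁻¹ := by
        rw [hL, Real.logb, div_le_iff₀ (by linarith)]
        nlinarith
      linarith
    -- h * log h⁻¹ ≤ h^α / (1-α)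
    have hD : h * Real.log h⁻¹ ≤ h ^ α / (1 - α) := by
      have hlr : Real.log h⁻¹ ≤ (h⁻¹) ^ (1 - α) / (1 - α) :=
        Real.log_le_rpow_div (by positivity) h1α
      have hmul : h * ((h⁻¹) ^ (1 - α) / (1 - α)) = h ^ α / (1 - α) := by
        rw [Real.inv_rpow hh.le, ← Real.rpow_neg hh.le]
        rw [div_eq_mul_inv, div_eq_mul_inv, ← mul_assoc]
        congr 1
        calc h * h ^ (-(1 - α)) = h ^ (1:ℝ) * h ^ (-(1 - α)) := by rw [Real.rpow_one]
          _ = h ^ (1 + -(1 - α)) := (Real.rpow_add hh 1 (-(1 - α))).symm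
          _ = h ^ α := by norm_num
      calc h * Real.log h⁻¹ ≤ h * ((h⁻¹) ^ (1 - α) / (1 - α)) := by
            exact mul_le_mul_of_nonneg_left hlr hh.le
        _ = h ^ α / (1 - α) := hmul
    -- h ≤ h^α
    have hE : h ≤ h ^ α := by
      calc h = h ^ (1:ℝ) := (Real.rpow_one h).symm
        _ ≤ h ^ α := Real.rpow_le_rpow_of_exponent_ge hh h1 hα1.le
    calc |φ (z + h) - φ z| ≤ 2 * M / 2 ^ n + n * (C * h) / 2 := key n z h hh
      _ ≤ 2 * M * h + (2 * Real.log h⁻¹ + 1) * (C * h) / 2 := by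
          have hCh : 0 ≤ C * h := by positivity
          gcongr
      _ = 2 * M * h + C * (h * Real.log h⁻¹) + (C / 2) * h := by ring
      _ ≤ 2 * M * h ^ α + C * (h ^ α / (1 - α)) + (C / 2) * h ^ α := by
          gcongr
      _ = (2 * M + C / (1 - α) + C / 2) * h ^ α := by ring
  -- Conclude for arbitrary x, y
  intro x y hxy
  rcases lt_trichotomy x y with hlt | heq | hgt
  · have habs : |x - y| = y - x := by rw [abs_sub_comm]; exact abs_of_pos (by linarith)
    have := bound x (y - x) (by linarith) (by rw [← habs]; exact hxy)
    rw [abs_sub_comm]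
    have e : x + (y - x) = y := by ring
    rw [e] at this
    rwa [habs]
  · subst heq
    simp only [sub_self, abs_zero]
    rw [Real.zero_rpow hα0.ne', mul_zero]
  · have habs : |x - y| = x - y := abs_of_pos (by linarith)
    have := bound y (x - y) (by linarith) (by rw [← habs]; exact hxy)
    have e : y + (x - y) = x := by ring
    rw [e] at this
    rwa [habs]
end

section
/- Let h : ℝ → ℝ be a C¹ orientation-preserving diffeomorphism with derivative h' bounded above and bounded away from 0, such that h' satisfies the Zygmund condition with constant C. Then log h' also satisfies a Zygmund condition, with constant depending only on C, the upper bound of h', the lower bound of h', and a modulus-of-continuity bound of the form |h'(x+t) - h'(x)| ≤ C₁·t·log(1/t) for small t. -/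
/-- One-sided logarithmic difference estimate: if `c ≤ a, b` with `0 < c`
then `log a - log b ≤ |a - b| / c`. -/
lemma log_sub_log_le_aux {a b c : ℝ} (hc : 0 < c) (ha : c ≤ a) (hb : c ≤ b) :
    Real.log a - Real.log b ≤ |a - b| / c := by
  have ha' : 0 < a := hc.trans_le ha
  have hb' : 0 < b := hc.trans_le hb
  have h1 : Real.log a - Real.log b ≤ a / b - 1 := by
    rw [← Real.log_div ha'.ne' hb'.ne']
    exact Real.log_le_sub_one_of_pos (div_pos ha' hb')
  have h2 : a / b - 1 = (a - b) / b := by field_simp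
  have h3 : (a - b) / b ≤ |a - b| / c := by
    rw [div_le_div_iff₀ hb' hc]
    nlinarith [le_abs_self (a - b), abs_nonneg (a - b)]
  linarith

lemma abs_log_sub_log_le {a b c : ℝ} (hc : 0 < c) (ha : c ≤ a) (hb : c ≤ b) :
    |Real.log a - Real.log b| ≤ |a - b| / c := by
  rw [abs_le]
  constructor
  · have := log_sub_log_le_aux hc hb ha
    rw [abs_sub_comm] at this
    linarith
  · exact log_sub_log_le_aux hc ha hb

set_option maxHeartbeats 1000000 in
/-- If `h` is a C¹ diffeomorphism of `ℝ` with `0 < m ≤ h' ≤ M`, `h'` satisfying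
the Zygmund condition with constant `C` and having modulus of continuity
`C₁ · t · log(1/t)` for small `t`, then `log h'` also satisfies a Zygmund
condition, with constant depending only on `C`, `C₁`, `m`, `M`. -/
theorem log_deriv_zygmund (C C₁ m M : ℝ) (hm : 0 < m) (hmM : m ≤ M)
    (hC : 0 ≤ C) (hC₁ : 0 ≤ C₁) :
    ∃ C' : ℝ, 0 ≤ C' ∧ ∀ h h' : ℝ → ℝ,
      (∀ x, HasDerivAt h (h' x) x) →
      (∀ x, m ≤ h' x) → (∀ x, h' x ≤ M) →
      (∀ x t : ℝ, 0 < t → |h' (x + t) - 2 * h' x + h' (x - t)| ≤ C * t) →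
      (∀ x t : ℝ, 0 < t → t < 1 / 2 →
        |h' (x + t) - h' x| ≤ C₁ * t * Real.log (1 / t)) →
      ∀ x t : ℝ, 0 < t →
        |Real.log (h' (x + t)) - 2 * Real.log (h' x) + Real.log (h' (x - t))|
          ≤ C' * t := by
  refine ⟨(4 * C₁ ^ 2 + M * C) / (m * m) + 4 * (M - m) / m, ?_, ?_⟩
  · apply add_nonneg
    · apply div_nonneg
      · nlinarith
      · positivity
    · apply div_nonneg <;> linarith
  intro h h' _ hlow hup hzyg hmod x t ht
  set a := h' (x + t) with ha_def
  set b := h' x with hb_def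
  set c := h' (x - t) with hc_def
  have ham : m ≤ a := hlow _
  have hbm : m ≤ b := hlow _
  have hcm : m ≤ c := hlow _
  have haM : a ≤ M := hup _
  have hbM : b ≤ M := hup _
  have hcM : c ≤ M := hup _
  have ha' : 0 < a := hm.trans_le ham
  have hb' : 0 < b := hm.trans_le hbm
  have hc' : 0 < c := hm.trans_le hcm
  by_cases hts : t < 1 / 2
  · -- small t: use the second-difference estimate via log(ac) - log(b²)
    have hkey : Real.log a - 2 * Real.log b + Real.log c
        = Real.log (a * c) - Real.log (b * b) := by
      rw [Real.log_mul ha'.ne' hc'.ne', Real.log_mul hb'.ne' hb'.ne']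
      ring
    have hmm : (0:ℝ) < m * m := by positivity
    have h1 : |Real.log (a * c) - Real.log (b * b)| ≤ |a * c - b * b| / (m * m) :=
      abs_log_sub_log_le hmm (mul_le_mul ham hcm hm.le (hm.le.trans ham))
        (mul_le_mul hbm hbm hm.le (hm.le.trans hbm))
    -- modulus bounds
    have hab : |a - b| ≤ C₁ * t * Real.log (1 / t) := hmod x t ht hts
    have hcb : |c - b| ≤ C₁ * t * Real.log (1 / t) := by
      have := hmod (x - t) t ht hts
      rw [sub_add_cancel] at this
      rw [abs_sub_comm]
      exact this
    have hsum : |a - 2 * b + c| ≤ C * t := hzyg x t ht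
    set L := Real.log (1 / t) with hL_def
    have hL0 : 0 ≤ L := Real.log_nonneg (by rw [le_div_iff₀ ht]; linarith)
    have hst : 0 < Real.sqrt t := Real.sqrt_pos.mpr ht
    -- L ≤ 2 / √t
    have hLsq : L ≤ 2 / Real.sqrt t := by
      have h2 : (1 / Real.sqrt t) ^ 2 = 1 / t := by
        rw [div_pow, one_pow, Real.sq_sqrt ht.le]
      have h3 : L = 2 * Real.log (1 / Real.sqrt t) := by
        rw [hL_def, ← h2, Real.log_pow]
        push_cast
        ring
      have h4 : Real.log (1 / Real.sqrt t) ≤ 1 / Real.sqrt t - 1 :=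
        Real.log_le_sub_one_of_pos (by positivity)
      have h5 : 1 / Real.sqrt t - 1 ≤ 1 / Real.sqrt t := by linarith
      calc L = 2 * Real.log (1 / Real.sqrt t) := h3
        _ ≤ 2 * (1 / Real.sqrt t) := by linarith
        _ = 2 / Real.sqrt t := by ring
    have hLL : L * L ≤ 4 / t := by
      calc L * L ≤ (2 / Real.sqrt t) * (2 / Real.sqrt t) :=
            mul_le_mul hLsq hLsq hL0 (by positivity)
        _ = 4 / t := by
            rw [div_mul_div_comm, Real.mul_self_sqrt ht.le]; norm_num
    have hprod : |a - b| * |c - b| ≤ 4 * C₁ ^ 2 * t := by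
      have h6 : |a - b| * |c - b| ≤ (C₁ * t * L) * (C₁ * t * L) :=
        mul_le_mul hab hcb (abs_nonneg _) (by positivity)
      have h7 : (C₁ * t * L) * (C₁ * t * L) = C₁ ^ 2 * t ^ 2 * (L * L) := by ring
      have h8 : C₁ ^ 2 * t ^ 2 * (L * L) ≤ C₁ ^ 2 * t ^ 2 * (4 / t) := by
        apply mul_le_mul_of_nonneg_left hLL (by positivity)
      have h9 : C₁ ^ 2 * t ^ 2 * (4 / t) = 4 * C₁ ^ 2 * t := by
        field_simp
      linarith
    have hdecomp : |a * c - b * b| ≤ |a - b| * |c - b| + b * |a - 2 * b + c| := by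
      have : a * c - b * b = (a - b) * (c - b) + b * (a - 2 * b + c) := by ring
      rw [this]
      calc |(a - b) * (c - b) + b * (a - 2 * b + c)|
          ≤ |(a - b) * (c - b)| + |b * (a - 2 * b + c)| := abs_add_le _ _
        _ = |a - b| * |c - b| + |b| * |a - 2 * b + c| := by rw [abs_mul, abs_mul]
        _ = |a - b| * |c - b| + b * |a - 2 * b + c| := by rw [abs_of_pos hb']
    have h10 : b * |a - 2 * b + c| ≤ M * (C * t) :=
      mul_le_mul hbM hsum (abs_nonneg _) (hm.le.trans (hmM))
    have h11 : |a * c - b * b| ≤ 4 * C₁ ^ 2 * t + M * C * t := by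
      have := hprod
      nlinarith
    rw [hkey] at *
    have h12 : |Real.log (a * c) - Real.log (b * b)| ≤ (4 * C₁ ^ 2 + M * C) / (m * m) * t := by
      calc |Real.log (a * c) - Real.log (b * b)| ≤ |a * c - b * b| / (m * m) := h1
        _ ≤ (4 * C₁ ^ 2 * t + M * C * t) / (m * m) := by gcongr
        _ = (4 * C₁ ^ 2 + M * C) / (m * m) * t := by ring
    have hrest : 0 ≤ 4 * (M - m) / m * t := by
      apply mul_nonneg
      · apply div_nonneg <;> linarith
      · linarith
    calc |Real.log (a * c) - Real.log (b * b)| ≤ (4 * C₁ ^ 2 + M * C) / (m * m) * t := h12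
      _ ≤ ((4 * C₁ ^ 2 + M * C) / (m * m) + 4 * (M - m) / m) * t := by nlinarith
  · -- large t : crude bound
    push_neg at hts
    have hab : |a - b| ≤ M - m := abs_le.mpr ⟨by linarith, by linarith⟩
    have hcb : |c - b| ≤ M - m := abs_le.mpr ⟨by linarith, by linarith⟩
    have h1 : |Real.log a - Real.log b| ≤ |a - b| / m := abs_log_sub_log_le hm ham hbm
    have h2 : |Real.log c - Real.log b| ≤ |c - b| / m := abs_log_sub_log_le hm hcm hbm
    have h3 : |Real.log a - 2 * Real.log b + Real.log c|
        ≤ |Real.log a - Real.log b| + |Real.log c - Real.log b| := by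
      have : Real.log a - 2 * Real.log b + Real.log c
          = (Real.log a - Real.log b) + (Real.log c - Real.log b) := by ring
      rw [this]
      exact abs_add_le _ _
    have h4 : |Real.log a - 2 * Real.log b + Real.log c| ≤ 2 * (M - m) / m := by
      have e1 : |a - b| / m ≤ (M - m) / m := by gcongr
      have e2 : |c - b| / m ≤ (M - m) / m := by gcongr
      calc |Real.log a - 2 * Real.log b + Real.log c|
          ≤ |a - b| / m + |c - b| / m := by linarith
        _ ≤ (M - m) / m + (M - m) / m := by linarith
        _ = 2 * (M - m) / m := by ring
    have h5 : 2 * (M - m) / m ≤ 4 * (M - m) / m * t := by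
      rw [div_mul_eq_mul_div, div_le_div_iff₀ hm hm]
      nlinarith [mul_nonneg (mul_nonneg (sub_nonneg.2 hmM) hm.le)
        (by linarith : (0:ℝ) ≤ 4 * t - 2)]
    have h6 : 0 ≤ (4 * C₁ ^ 2 + M * C) / (m * m) * t :=
      mul_nonneg (div_nonneg (by nlinarith) (by positivity)) ht.le
    nlinarith
end

section
/- Let φ : ℝ → ℂ be continuous and satisfy the Zygmund condition |φ(x+t) - 2φ(x) + φ(x-t)| ≤ C·t with φ bounded away from 0 (i.e. |φ(x)| ≥ m > 0) and bounded above, and with modulus of continuity |φ(x+t) - φ(x)| ≤ C₁·t·(1 + log⁺(1/t)). If φ takes values in a fixed branch domain of the logarithm (e.g. φ real-valued and positive), then ψ = log φ satisfies a Zygmund condition |ψ(x+t) - 2ψ(x) + ψ(x-t)| ≤ C'·t where C' depends only on C, C₁, m, and sup|φ|. -/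
/-- Second-order estimate for the logarithm: for `a, b ≥ m > 0`,
`|log a - log b - (a-b)/b| ≤ (a-b)²/m²`. -/
lemma log_lin_approx {m a b : ℝ} (hm : 0 < m) (ha : m ≤ a) (hb : m ≤ b) :
    |Real.log a - Real.log b - (a - b) / b| ≤ (a - b) ^ 2 / m ^ 2 := by
  have ha0 : 0 < a := lt_of_lt_of_le hm ha
  have hb0 : 0 < b := lt_of_lt_of_le hm hb
  have h1 : Real.log a - Real.log b ≤ (a - b) / b := by
    have h := Real.log_le_sub_one_of_pos (div_pos ha0 hb0)
    rw [Real.log_div ha0.ne' hb0.ne'] at h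
    have : a / b - 1 = (a - b) / b := by field_simp
    linarith [this ▸ h]
  have h2 : (a - b) / a ≤ Real.log a - Real.log b := by
    have h := Real.log_le_sub_one_of_pos (div_pos hb0 ha0)
    rw [Real.log_div hb0.ne' ha0.ne'] at h
    have : b / a - 1 = (b - a) / a := by field_simp
    have h' : Real.log b - Real.log a ≤ (b - a) / a := by linarith [this ▸ h]
    have heq : (a - b) / a = -((b - a) / a) := by ring
    linarith [h', heq]
  rw [abs_le]
  constructor
  · have key : (a - b) / a - (a - b) / b = -((a - b) ^ 2 / (a * b)) := by
      field_simp; ring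
    have hmm : m ^ 2 ≤ a * b := by nlinarith
    have hdiv : (a - b) ^ 2 / (a * b) ≤ (a - b) ^ 2 / m ^ 2 :=
      div_le_div_of_nonneg_left (sq_nonneg _) (by positivity) hmm
    linarith
  · have : 0 ≤ (a - b) ^ 2 / m ^ 2 := by positivity
    linarith

/-- For `0 < t ≤ 1`, `(1 + log⁺(1/t))² ≤ 9/t`. -/
lemma logplus_sq_le {t : ℝ} (ht : 0 < t) (h1 : t ≤ 1) :
    (1 + max (Real.log (1 / t)) 0) ^ 2 ≤ 9 / t := by
  have hs : 0 < Real.sqrt t := Real.sqrt_pos.mpr ht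
  have hs1 : Real.sqrt t ≤ 1 := by
    rw [show (1 : ℝ) = Real.sqrt 1 by simp]
    exact Real.sqrt_le_sqrt h1
  have hmax : max (Real.log (1 / t)) 0 = Real.log (1 / t) :=
    max_eq_left (Real.log_nonneg (by rw [le_div_iff₀ ht]; linarith))
  have hlog : Real.log (1 / t) ≤ 2 / Real.sqrt t := by
    have hsq : (1 / Real.sqrt t) ^ 2 = 1 / t := by
      rw [div_pow, one_pow, Real.sq_sqrt ht.le]
    have : Real.log (1 / t) = 2 * Real.log (1 / Real.sqrt t) := by
      rw [← hsq, Real.log_pow]; push_cast; ring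
    rw [this]
    have h := Real.log_le_sub_one_of_pos (by positivity : 0 < 1 / Real.sqrt t)
    have : 2 * Real.log (1 / Real.sqrt t) ≤ 2 * (1 / Real.sqrt t - 1) := by linarith
    have h2 : 2 * (1 / Real.sqrt t - 1) ≤ 2 / Real.sqrt t := by
      rw [mul_sub, mul_one_div]; linarith
    linarith
  have hinv : 1 ≤ 1 / Real.sqrt t := by
    rw [le_div_iff₀ hs]; linarith
  have hbound : 1 + max (Real.log (1 / t)) 0 ≤ 3 / Real.sqrt t := by
    rw [hmax]
    have : (3 : ℝ) / Real.sqrt t = 1 / Real.sqrt t + 2 / Real.sqrt t := by ring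
    rw [this]
    linarith
  have hnn : 0 ≤ 1 + max (Real.log (1 / t)) 0 := by positivity
  calc (1 + max (Real.log (1 / t)) 0) ^ 2 ≤ (3 / Real.sqrt t) ^ 2 := by
        exact pow_le_pow_left₀ hnn hbound 2
    _ = 9 / t := by
        rw [div_pow, Real.sq_sqrt ht.le]; norm_num

/-- If a continuous positive function `φ` with `0 < m ≤ φ ≤ M` satisfies the
Zygmund condition with constant `C` and has modulus of continuity
`C₁ · t · (1 + log⁺(1/t))`, then `log φ` satisfies a Zygmund condition with
constant depending only on `C`, `C₁`, `m`, `M`. -/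
theorem log_zygmund (C C₁ m M : ℝ) (hm : 0 < m) (hmM : m ≤ M)
    (hC : 0 ≤ C) (hC₁ : 0 ≤ C₁) :
    ∃ C' : ℝ, 0 ≤ C' ∧ ∀ φ : ℝ → ℝ, Continuous φ →
      (∀ x, m ≤ φ x) → (∀ x, φ x ≤ M) →
      (∀ x t : ℝ, 0 < t → |φ (x + t) - 2 * φ x + φ (x - t)| ≤ C * t) →
      (∀ x t : ℝ, 0 < t →
        |φ (x + t) - φ x| ≤ C₁ * t * (1 + max (Real.log (1 / t)) 0)) →
      ∀ x t : ℝ, 0 < t →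
        |Real.log (φ (x + t)) - 2 * Real.log (φ x) + Real.log (φ (x - t))|
          ≤ C' * t := by
  have hlogMm : 0 ≤ Real.log (M / m) :=
    Real.log_nonneg (by rw [le_div_iff₀ hm]; linarith)
  refine ⟨C / m + 18 * C₁ ^ 2 / m ^ 2 + 2 * Real.log (M / m), by positivity, ?_⟩
  intro φ hφc hφm hφM hZ hMod x t ht
  have hc0 : 0 < φ x := lt_of_lt_of_le hm (hφm x)
  have ha0 : 0 < φ (x + t) := lt_of_lt_of_le hm (hφm (x + t))
  have hb0 : 0 < φ (x - t) := lt_of_lt_of_le hm (hφm (x - t))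
  set a := φ (x + t) with ha_def
  set b := φ (x - t) with hb_def
  set c := φ x with hc_def
  rcases le_or_gt t 1 with ht1 | ht1
  · -- small t
    have E1 := log_lin_approx hm (hφm (x + t)) (hφm x)
    have E2 := log_lin_approx hm (hφm (x - t)) (hφm x)
    have decomp : Real.log a - 2 * Real.log c + Real.log b
        = (a - 2 * c + b) / c + (Real.log a - Real.log c - (a - c) / c)
          + (Real.log b - Real.log c - (b - c) / c) := by
      field_simp
      ring
    have hZ' := hZ x t ht
    have L := max (Real.log (1 / t)) 0
    have hma : |a - c| ≤ C₁ * t * (1 + max (Real.log (1 / t)) 0) := hMod x t ht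
    have hmb : |b - c| ≤ C₁ * t * (1 + max (Real.log (1 / t)) 0) := by
      have h := hMod (x - t) t ht
      rw [sub_add_cancel] at h
      rw [abs_sub_comm]
      exact h
    have hsq := logplus_sq_le ht ht1
    have hLnn : 0 ≤ 1 + max (Real.log (1 / t)) 0 := by positivity
    have hA : (a - c) ^ 2 ≤ 9 * C₁ ^ 2 * t := by
      have h1 : (a - c) ^ 2 ≤ (C₁ * t * (1 + max (Real.log (1 / t)) 0)) ^ 2 := by
        rw [← sq_abs (a - c)]
        exact pow_le_pow_left₀ (abs_nonneg _) hma 2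
      have h2 : (C₁ * t * (1 + max (Real.log (1 / t)) 0)) ^ 2
          = C₁ ^ 2 * t ^ 2 * (1 + max (Real.log (1 / t)) 0) ^ 2 := by ring
      have h3 : C₁ ^ 2 * t ^ 2 * (1 + max (Real.log (1 / t)) 0) ^ 2
          ≤ C₁ ^ 2 * t ^ 2 * (9 / t) := by
        have : (0 : ℝ) ≤ C₁ ^ 2 * t ^ 2 := by positivity
        exact mul_le_mul_of_nonneg_left hsq this
      have h4 : C₁ ^ 2 * t ^ 2 * (9 / t) = 9 * C₁ ^ 2 * t := by
        field_simp
      linarith [h2 ▸ h1, h4 ▸ h3]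
    have hB : (b - c) ^ 2 ≤ 9 * C₁ ^ 2 * t := by
      have h1 : (b - c) ^ 2 ≤ (C₁ * t * (1 + max (Real.log (1 / t)) 0)) ^ 2 := by
        rw [← sq_abs (b - c)]
        exact pow_le_pow_left₀ (abs_nonneg _) hmb 2
      have h2 : (C₁ * t * (1 + max (Real.log (1 / t)) 0)) ^ 2
          = C₁ ^ 2 * t ^ 2 * (1 + max (Real.log (1 / t)) 0) ^ 2 := by ring
      have h3 : C₁ ^ 2 * t ^ 2 * (1 + max (Real.log (1 / t)) 0) ^ 2
          ≤ C₁ ^ 2 * t ^ 2 * (9 / t) := by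
        have : (0 : ℝ) ≤ C₁ ^ 2 * t ^ 2 := by positivity
        exact mul_le_mul_of_nonneg_left hsq this
      have h4 : C₁ ^ 2 * t ^ 2 * (9 / t) = 9 * C₁ ^ 2 * t := by
        field_simp
      linarith [h2 ▸ h1, h4 ▸ h3]
    have hmain : |(a - 2 * c + b) / c| ≤ C * t / m := by
      rw [abs_div, abs_of_pos hc0]
      calc |a - 2 * c + b| / c ≤ (C * t) / c := by gcongr
        _ ≤ C * t / m := by
            exact div_le_div_of_nonneg_left (by positivity) hm (hφm x)
    have hE1 : |Real.log a - Real.log c - (a - c) / c| ≤ 9 * C₁ ^ 2 * t / m ^ 2 := by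
      refine E1.trans ?_
      gcongr
    have hE2 : |Real.log b - Real.log c - (b - c) / c| ≤ 9 * C₁ ^ 2 * t / m ^ 2 := by
      refine E2.trans ?_
      gcongr
    calc |Real.log a - 2 * Real.log c + Real.log b|
        ≤ |(a - 2 * c + b) / c| + |Real.log a - Real.log c - (a - c) / c|
          + |Real.log b - Real.log c - (b - c) / c| := by
          rw [decomp]
          exact (abs_add_le _ _).trans (by gcongr; exact abs_add_le _ _)
      _ ≤ C * t / m + 9 * C₁ ^ 2 * t / m ^ 2 + 9 * C₁ ^ 2 * t / m ^ 2 := by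
          linarith
      _ ≤ (C / m + 18 * C₁ ^ 2 / m ^ 2 + 2 * Real.log (M / m)) * t := by
          have h1 : C * t / m = C / m * t := by ring
          have h2 : 9 * C₁ ^ 2 * t / m ^ 2 + 9 * C₁ ^ 2 * t / m ^ 2
              = 18 * C₁ ^ 2 / m ^ 2 * t := by ring
          nlinarith [mul_nonneg hlogMm ht.le]
  · -- large t : use the trivial bound
    have hla : Real.log a ≤ Real.log M := Real.log_le_log ha0 (hφM (x + t))
    have hlb : Real.log b ≤ Real.log M := Real.log_le_log hb0 (hφM (x - t))
    have hlc : Real.log m ≤ Real.log c := Real.log_le_log hm (hφm x)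
    have hla' : Real.log m ≤ Real.log a := Real.log_le_log hm (hφm (x + t))
    have hlb' : Real.log m ≤ Real.log b := Real.log_le_log hm (hφm (x - t))
    have hlc' : Real.log c ≤ Real.log M := Real.log_le_log hc0 (hφM x)
    have hMm : Real.log (M / m) = Real.log M - Real.log m :=
      Real.log_div (by linarith : (0:ℝ) < M).ne' hm.ne'
    have habs : |Real.log a - 2 * Real.log c + Real.log b|
        ≤ 2 * Real.log (M / m) := by
      rw [abs_le, hMm]
      constructor <;> linarith
    have : 2 * Real.log (M / m) ≤ 2 * Real.log (M / m) * t := by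
      nlinarith
    have hrest : 0 ≤ (C / m + 18 * C₁ ^ 2 / m ^ 2) * t :=
      mul_nonneg (add_nonneg (div_nonneg hC hm.le)
        (div_nonneg (by positivity) (by positivity))) ht.le
    nlinarith
end
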